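/- Let Ψ be an ANN with ReLU activation of depth L, constant width d, and one-dimensional output, defined on [a,b]^d. Then there exists a spiking neural network Φ with N(Φ) = N(Ψ) + L(2d+3) − (2d+2) computational units and L(Φ) = 3L − 2 layers realizing R_Ψ on [a,b]^d. -/
import Mathlib


/-- `FiresAt w dl θ t τ`: SRM neuron with weights `w`, delays `dl`, threshold `θ`
fires at time `τ` on input firing times `t` (nonempty causal subset with positive
weight sum, arrival/firing order constraints, SRM firing-time formula). -/
def FiresAt {n : ℕ} (w dl : Fin n → ℝ) (θ : ℝ) (t : Fin n → ℝ) (τ : ℝ) : Prop :=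
  ∃ S : Finset (Fin n), S.Nonempty ∧ 0 < ∑ i ∈ S, w i ∧
    (∀ k ∈ S, t k + dl k < τ) ∧ (∀ k ∉ S, τ ≤ t k + dl k) ∧
    τ = (θ + ∑ i ∈ S, w i * (t i + dl i)) / (∑ i ∈ S, w i)

/-- A layered spiking neural network. -/
structure SNN where
  L : ℕ
  width : ℕ → ℕ
  W : ∀ l, Fin (width l) → Fin (width (l+1)) → ℝ
  D : ∀ l, Fin (width l) → Fin (width (l+1)) → ℝ
  Θ : ∀ l, Fin (width (l+1)) → ℝ

/-- Thresholds positive, delays nonnegative. -/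
def SNN.Valid (Φ : SNN) : Prop :=
  (∀ l j, 0 < Φ.Θ l j) ∧ (∀ l i j, 0 ≤ Φ.D l i j)

/-- Spike propagation through the layers. -/
def SNN.Fires (Φ : SNN) (t0 : Fin (Φ.width 0) → ℝ) (tL : Fin (Φ.width Φ.L) → ℝ) : Prop :=
  ∃ t : ∀ l, Fin (Φ.width l) → ℝ, t 0 = t0 ∧ t Φ.L = tL ∧
    ∀ l < Φ.L, ∀ j, FiresAt (fun i => Φ.W l i j) (fun i => Φ.D l i j) (Φ.Θ l j)
      (t l) (t (l+1) j)

/-- `Φ` realizes the scalar function `f` on `[a,b]^d` with encoding `T_in + x`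
on the `d` genuine inputs, auxiliary input firing times `taux`, and decoding
`−T_out + t_v` on the single output neuron. -/
def SNN.Realizes (Φ : SNN) (d : ℕ) (taux : Fin (Φ.width 0) → ℝ)
    (f : (Fin d → ℝ) → ℝ) (a b Tin Tout : ℝ) : Prop :=
  d ≤ Φ.width 0 ∧ Φ.width Φ.L = 1 ∧ Tin < Tout ∧
  ∀ x : Fin d → ℝ, (∀ i, x i ∈ Set.Icc a b) →
    Φ.Fires (fun i => if h : (i : ℕ) < d then Tin + x ⟨i, h⟩ else taux i)
      (fun _ => Tout + f x)

/-- Hidden-layer iteration of a ReLU ANN of constant width `d`. -/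
noncomputable def annIter (d : ℕ) (A : ℕ → Fin d → Fin d → ℝ) (B : ℕ → Fin d → ℝ) :
    ℕ → (Fin d → ℝ) → (Fin d → ℝ)
  | 0, x => x
  | (l+1), x => fun i => max 0 ((∑ j, A l i j * annIter d A B l x j) + B l i)

/-- Realization of a depth-`L`, width-`d` ReLU ANN with one-dimensional output:
`L−1` hidden ReLU layers followed by a final affine layer `A_L y + b_L`. -/
noncomputable def annReal (d L : ℕ) (A : ℕ → Fin d → Fin d → ℝ) (B : ℕ → Fin d → ℝ)
    (AL : Fin d → ℝ) (bL : ℝ) (x : Fin d → ℝ) : ℝ :=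
  (∑ j, AL j * annIter d A B (L - 1) x j) + bL

open Finset in
lemma firesAt_all {n : ℕ} (hn : 0 < n) (w : Fin n → ℝ) (θ : ℝ) (t : Fin n → ℝ) (τ : ℝ)
    (hw : ∑ k, w k = 1) (h : ∀ k, t k < τ) (hτ : θ + ∑ k, w k * t k = τ) :
    FiresAt w (fun _ => 0) θ t τ := by
  refine ⟨Finset.univ, ⟨⟨0, hn⟩, Finset.mem_univ _⟩, by rw [hw]; norm_num, ?_, ?_, ?_⟩
  · intro k _; simpa using h k
  · intro k hk; exact absurd (Finset.mem_univ k) hk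
  · have : (∑ i ∈ Finset.univ, w i * (t i + 0)) = ∑ k, w k * t k := by simp
    rw [this, hw, hτ, div_one]

open Finset in
lemma firesAt_filt {n : ℕ} (w : Fin n → ℝ) (θ : ℝ) (t : Fin n → ℝ) (τ : ℝ)
    (h1 : ∃ k, t k < τ)
    (h2 : 0 < ∑ k ∈ Finset.univ.filter (fun k => t k < τ), w k)
    (h3 : θ + ∑ k ∈ Finset.univ.filter (fun k => t k < τ), w k * t k
        = τ * ∑ k ∈ Finset.univ.filter (fun k => t k < τ), w k) :
    FiresAt w (fun _ => 0) θ t τ := by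
  obtain ⟨k0, hk0⟩ := h1
  refine ⟨Finset.univ.filter (fun k => t k < τ), ⟨k0, by simp [hk0]⟩, h2, ?_, ?_, ?_⟩
  · intro k hk; rw [add_zero]; exact (Finset.mem_filter.mp hk).2
  · intro k hk
    simp only [Finset.mem_filter, Finset.mem_univ, true_and, not_lt] at hk
    rw [add_zero]; exact hk
  · have : (∑ i ∈ Finset.univ.filter (fun k => t k < τ), w i * (t i + 0))
        = ∑ k ∈ Finset.univ.filter (fun k => t k < τ), w k * t k := by simp
    rw [this, eq_div_iff (ne_of_gt h2)]
    linarith [h3]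

open Finset in
lemma sum_ind2 {n : ℕ} (S : Finset (Fin n)) (i0 ia : Fin n) (hne : i0 ≠ ia) (g : Fin n → ℝ) :
    ∑ k ∈ S, (if k = i0 then (1:ℝ) else if k = ia then 1 else 0) * g k
      = (if i0 ∈ S then g i0 else 0) + (if ia ∈ S then g ia else 0) := by
  have hpt : ∀ k ∈ S, (if k = i0 then (1:ℝ) else if k = ia then 1 else 0) * g k
      = (if k = i0 then g k else 0) + (if k = ia then g k else 0) := by
    intro k _
    by_cases h : k = i0
    · subst h; simp [hne]
    · by_cases h' : k = ia
      · subst h'; simp [h, Ne.symm hne]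
      · simp [h, h']
  rw [Finset.sum_congr rfl hpt, Finset.sum_add_distrib,
    Finset.sum_ite_eq' S i0 g, Finset.sum_ite_eq' S ia g]
noncomputable section S17sec
namespace S17
open Finset

structure Ctx (d : ℕ) : Type where
  L : ℕ
  A : ℕ → Fin d → Fin d → ℝ
  B : ℕ → Fin d → ℝ
  AL : Fin d → ℝ
  bL : ℝ
  a : ℝ
  b : ℝ

variable {d : ℕ}

def Anat (c : Ctx d) (k i j : ℕ) : ℝ := if h : i < d ∧ j < d then c.A k ⟨i, h.1⟩ ⟨j, h.2⟩ else 0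
def Bnat (c : Ctx d) (k i : ℕ) : ℝ := if h : i < d then c.B k ⟨i, h⟩ else 0
def ALnat (c : Ctx d) (i : ℕ) : ℝ := if h : i < d then c.AL ⟨i, h⟩ else 0
def Ynat (c : Ctx d) (k : ℕ) (x : Fin d → ℝ) (i : ℕ) : ℝ :=
  if h : i < d then annIter d c.A c.B k x ⟨i, h⟩ else 0
def znat (c : Ctx d) (k : ℕ) (x : Fin d → ℝ) (i : ℕ) : ℝ :=
  (∑ m ∈ range d, Anat c k i m * Ynat c k x m) + Bnat c k i
def NA (c : Ctx d) (k : ℕ) : ℝ :=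
  (∑ i ∈ range d, ∑ j ∈ range d, |Anat c k i j|) + ∑ i ∈ range d, |Bnat c k i|
def bigM (c : Ctx d) : ℕ → ℝ
  | 0 => |c.a| + |c.b| + 1
  | (k+1) => (1 + NA c k) * bigM c k
def Rr (c : Ctx d) : ℝ := bigM c c.L
def Pp (c : Ctx d) : ℝ :=
  1 + (∑ k ∈ range c.L, NA c k) + (∑ i ∈ range d, |ALnat c i|) + |c.bL|
def Tm (c : Ctx d) : ℝ := Rr c + 3 * c.L + 2
def tan (c : Ctx d) (l : ℕ) : ℝ := -(Tm c) + l
def Qq (c : Ctx d) : ℝ := (Pp c + 1) * (Tm c + Rr c + 2) + 2 * Rr c + 2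
def Cc (c : Ctx d) : ℕ → ℝ
  | 0 => 0
  | (l+1) => if (l+1) % 3 = 2 then Cc c l else Qq c * Cc c l + Qq c
def SA (c : Ctx d) (k j : ℕ) : ℝ := ∑ m ∈ range d, Anat c k j m
def SAL (c : Ctx d) : ℝ := ∑ m ∈ range d, ALnat c m
def fnat (c : Ctx d) (x : Fin d → ℝ) : ℝ :=
  (∑ m ∈ range d, ALnat c m * Ynat c (c.L - 1) x m) + c.bL

/-- weight from input `i` of layer `l` to neuron `j` of layer `l+1`. -/
def wnat (c : Ctx d) (l i j : ℕ) : ℝ :=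
  if l + 1 = 3 * c.L - 2 then (if i < d then ALnat c i else 1 - SAL c)
  else if j = d then (if i = d then 1 else 0)
  else if (l+1) % 3 = 1 then
    (if i < d then -(Anat c (l/3) j i) else 1 + SA c (l/3) j)
  else if (l+1) % 3 = 2 then (if i = j ∨ i = d then 1 else 0)
  else (if i = j ∧ i < d then -2 else if i = d then 3 else 0)

/-- threshold of neuron `j` of layer `l+1`. -/
def θnat (c : Ctx d) (l j : ℕ) : ℝ :=
  if l + 1 = 3 * c.L - 2 then
    Cc c (3 * c.L - 2) + c.bL - SAL c * Cc c l - (1 - SAL c) * tan c l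
  else if j = d then 1
  else if (l+1) % 3 = 1 then
    Cc c (l+1) - Bnat c (l/3) j + SA c (l/3) j * Cc c l - (1 + SA c (l/3) j) * tan c l
  else if (l+1) % 3 = 2 then Cc c l - tan c l
  else Cc c (l+1) + 2 * Cc c l - 3 * tan c l

def wid (c : Ctx d) (l : ℕ) : ℕ := if 3 * c.L - 2 ≤ l then 1 else d + 1

/-- firing time of neuron `i` at layer `l`, on input `x`. -/
def Tt (c : Ctx d) (x : Fin d → ℝ) (l i : ℕ) : ℝ :=
  if 3 * c.L - 2 ≤ l then Cc c (3 * c.L - 2) + fnat c x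
  else if i < d then
    (if l % 3 = 0 then Cc c l + Ynat c (l/3) x i
     else if l % 3 = 1 then Cc c l - znat c (l/3) x i
     else Cc c l - max 0 (znat c (l/3) x i) / 2)
  else tan c l

def Phi (c : Ctx d) : SNN where
  L := 3 * c.L - 2
  width := wid c
  W := fun l i j => wnat c l i.val j.val
  D := fun _ _ _ => 0
  Θ := fun l j => if l + 1 ≤ 3 * c.L - 2 then θnat c l j.val else 1

end S17
end S17sec
noncomputable section S17sec2
namespace S17
open Finset

variable {d : ℕ} (c : Ctx d)

lemma NA_nonneg (k : ℕ) : 0 ≤ NA c k := by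
  unfold NA
  have h1 : (0:ℝ) ≤ ∑ i ∈ range d, ∑ j ∈ range d, |Anat c k i j| :=
    Finset.sum_nonneg fun i _ => Finset.sum_nonneg fun j _ => abs_nonneg _
  have h2 : (0:ℝ) ≤ ∑ i ∈ range d, |Bnat c k i| :=
    Finset.sum_nonneg fun i _ => abs_nonneg _
  linarith

lemma bigM_ge_one (k : ℕ) : 1 ≤ bigM c k := by
  induction k with
  | zero =>
    show (1:ℝ) ≤ |c.a| + |c.b| + 1
    have := abs_nonneg c.a; have := abs_nonneg c.b; linarith
  | succ k ih =>
    have := NA_nonneg c k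
    have : (1:ℝ) * 1 ≤ (1 + NA c k) * bigM c k := by nlinarith
    simpa [bigM] using this

lemma bigM_mono {k m : ℕ} (h : k ≤ m) : bigM c k ≤ bigM c m := by
  induction m with
  | zero =>
    have : k = 0 := by omega
    simp [this]
  | succ m ih =>
    rcases Nat.lt_or_ge k (m+1) with h' | h'
    · have h1 := ih (by omega)
      have h2 := NA_nonneg c m
      have h3 := bigM_ge_one c m
      have : bigM c m ≤ (1 + NA c m) * bigM c m := by nlinarith
      calc bigM c k ≤ bigM c m := h1
        _ ≤ _ := by simpa [bigM] using this
    · have : k = m + 1 := by omega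
      simp [this]

lemma Rr_ge_one : 1 ≤ Rr c := bigM_ge_one c c.L

lemma Pp_ge_one : 1 ≤ Pp c := by
  unfold Pp
  have h1 : (0:ℝ) ≤ ∑ k ∈ range c.L, NA c k := Finset.sum_nonneg fun k _ => NA_nonneg c k
  have h2 : (0:ℝ) ≤ ∑ i ∈ range d, |ALnat c i| := Finset.sum_nonneg fun i _ => abs_nonneg _
  have h3 : (0:ℝ) ≤ |c.bL| := abs_nonneg _
  linarith

lemma NA_le_P {k : ℕ} (hk : k < c.L) : NA c k ≤ Pp c := by
  unfold Pp
  have h1 : NA c k ≤ ∑ k' ∈ range c.L, NA c k' :=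
    Finset.single_le_sum (fun k' _ => NA_nonneg c k') (Finset.mem_range.mpr hk)
  have h2 : (0:ℝ) ≤ ∑ i ∈ range d, |ALnat c i| := Finset.sum_nonneg fun i _ => abs_nonneg _
  have h3 : (0:ℝ) ≤ |c.bL| := abs_nonneg _
  linarith

lemma row_abs_le {k j : ℕ} (hk : k < c.L) (hj : j < d) :
    ∑ m ∈ range d, |Anat c k j m| ≤ Pp c := by
  have h1 : ∑ m ∈ range d, |Anat c k j m| ≤ ∑ i ∈ range d, ∑ m ∈ range d, |Anat c k i m| :=
    Finset.single_le_sum (f := fun i => ∑ m ∈ range d, |Anat c k i m|)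
      (fun i _ => Finset.sum_nonneg fun m _ => abs_nonneg _) (Finset.mem_range.mpr hj)
  have h2 : (0:ℝ) ≤ ∑ i ∈ range d, |Bnat c k i| := Finset.sum_nonneg fun i _ => abs_nonneg _
  have := NA_le_P c hk
  unfold NA at this
  linarith

lemma SA_abs_le {k j : ℕ} (hk : k < c.L) (hj : j < d) : |SA c k j| ≤ Pp c :=
  le_trans (Finset.abs_sum_le_sum_abs _ _) (row_abs_le c hk hj)

lemma B_abs_le {k j : ℕ} (hk : k < c.L) (hj : j < d) : |Bnat c k j| ≤ Pp c := by
  have h1 : |Bnat c k j| ≤ ∑ i ∈ range d, |Bnat c k i| :=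
    Finset.single_le_sum (f := fun i => |Bnat c k i|) (fun i _ => abs_nonneg _)
      (Finset.mem_range.mpr hj)
  have h2 : (0:ℝ) ≤ ∑ i ∈ range d, ∑ m ∈ range d, |Anat c k i m| :=
    Finset.sum_nonneg fun i _ => Finset.sum_nonneg fun m _ => abs_nonneg _
  have := NA_le_P c hk
  unfold NA at this
  linarith

lemma ALsum_abs_le : ∑ i ∈ range d, |ALnat c i| ≤ Pp c := by
  unfold Pp
  have h1 : (0:ℝ) ≤ ∑ k ∈ range c.L, NA c k := Finset.sum_nonneg fun k _ => NA_nonneg c k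
  have h3 : (0:ℝ) ≤ |c.bL| := abs_nonneg _
  linarith

lemma SAL_abs_le : |SAL c| ≤ Pp c :=
  le_trans (Finset.abs_sum_le_sum_abs _ _) (ALsum_abs_le c)

lemma bL_abs_le : |c.bL| ≤ Pp c := by
  unfold Pp
  have h1 : (0:ℝ) ≤ ∑ k ∈ range c.L, NA c k := Finset.sum_nonneg fun k _ => NA_nonneg c k
  have h2 : (0:ℝ) ≤ ∑ i ∈ range d, |ALnat c i| := Finset.sum_nonneg fun i _ => abs_nonneg _
  linarith

lemma Tm_pos : 0 < Tm c := by
  have := Rr_ge_one c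
  unfold Tm
  positivity

lemma tan_le {l : ℕ} (hl : l ≤ 3 * c.L) : tan c l ≤ -(Rr c) - 2 := by
  unfold tan Tm
  have : (l : ℝ) ≤ 3 * c.L := by exact_mod_cast hl
  linarith

lemma tan_abs_le {l : ℕ} (hl : l ≤ 3 * c.L) : |tan c l| ≤ Tm c := by
  have h1 := tan_le c hl
  have h2 : -(Tm c) ≤ tan c l := by
    unfold tan
    have : (0:ℝ) ≤ l := Nat.cast_nonneg l
    linarith
  have := Rr_ge_one c
  rw [abs_le]
  constructor
  · exact h2
  · unfold Tm at *; linarith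

lemma Qq_ge : Pp c * (Rr c + 1) + Rr c + 1 ≤ Qq c := by
  have hP := Pp_ge_one c
  have hR := Rr_ge_one c
  have hT := Tm_pos c
  unfold Qq
  nlinarith

lemma Qq_ge2 : Pp c + (1 + Pp c) * Tm c + 1 ≤ Qq c := by
  have hP := Pp_ge_one c
  have hR := Rr_ge_one c
  have hT := Tm_pos c
  unfold Qq
  nlinarith

lemma Qq_pos : 0 < Qq c := by
  have hP := Pp_ge_one c
  have hR := Rr_ge_one c
  have := Qq_ge c
  nlinarith

lemma Cc_nonneg (l : ℕ) : 0 ≤ Cc c l := by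
  induction l with
  | zero => simp [Cc]
  | succ l ih =>
    have hQ := Qq_pos c
    by_cases h : (l+1) % 3 = 2 <;> simp [Cc, h] <;> nlinarith

lemma Cc_succ_eq {l : ℕ} (h : (l+1) % 3 ≠ 2) : Cc c (l+1) = Qq c * Cc c l + Qq c := by
  simp [Cc, h]

lemma Cc_max_eq {l : ℕ} (h : (l+1) % 3 = 2) : Cc c (l+1) = Cc c l := by
  simp [Cc, h]

lemma Cc_succ_ge {l : ℕ} (h : (l+1) % 3 ≠ 2) :
    Cc c l + Pp c * (Rr c + 1) + Rr c + 1 ≤ Cc c (l+1) := by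
  rw [Cc_succ_eq c h]
  have h1 := Qq_ge c
  have h2 := Cc_nonneg c l
  have h3 : 1 ≤ Qq c := by have := Pp_ge_one c; have := Rr_ge_one c; nlinarith
  nlinarith

lemma Cc_succ_ge_Q {l : ℕ} (h : (l+1) % 3 ≠ 2) : Qq c ≤ Cc c (l+1) := by
  rw [Cc_succ_eq c h]
  have := Qq_pos c
  have := Cc_nonneg c l
  nlinarith

end S17
end S17sec2
noncomputable section S17sec3
namespace S17
open Finset

variable {d : ℕ} (c : Ctx d)

lemma sumconv (g : Fin d → ℝ) (gn : ℕ → ℝ) (h : ∀ j : Fin d, gn j.val = g j) :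
    ∑ m ∈ range d, gn m = ∑ j, g j := by
  rw [← Fin.sum_univ_eq_sum_range]
  exact Finset.sum_congr rfl fun j _ => h j

lemma Ynat_succ (k : ℕ) (x : Fin d → ℝ) {i : ℕ} (hi : i < d) :
    Ynat c (k+1) x i = max 0 (znat c k x i) := by
  unfold Ynat
  rw [dif_pos hi]
  show max 0 ((∑ j, c.A k ⟨i, hi⟩ j * annIter d c.A c.B k x j) + c.B k ⟨i, hi⟩) = _
  congr 1
  unfold znat
  congr 1
  · refine (sumconv (fun j => c.A k ⟨i, hi⟩ j * annIter d c.A c.B k x j) _ ?_).symm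
    intro j
    unfold Anat Ynat
    rw [dif_pos ⟨hi, j.isLt⟩, dif_pos j.isLt]
  · unfold Bnat; rw [dif_pos hi]

lemma z_bound_aux (k : ℕ) (x : Fin d → ℝ) {i : ℕ} (hi : i < d)
    (hY : ∀ m, m < d → |Ynat c k x m| ≤ bigM c k) :
    |znat c k x i| ≤ bigM c (k+1) := by
  have h1 : |∑ m ∈ range d, Anat c k i m * Ynat c k x m|
      ≤ (∑ m ∈ range d, |Anat c k i m|) * bigM c k := by
    rw [Finset.sum_mul]
    refine le_trans (Finset.abs_sum_le_sum_abs _ _) (Finset.sum_le_sum ?_)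
    intro m hm
    rw [abs_mul]
    exact mul_le_mul_of_nonneg_left (hY m (Finset.mem_range.mp hm)) (abs_nonneg _)
  have h3 : (∑ m ∈ range d, |Anat c k i m|) ≤ ∑ i' ∈ range d, ∑ m ∈ range d, |Anat c k i' m| :=
    Finset.single_le_sum (f := fun i' => ∑ m ∈ range d, |Anat c k i' m|)
      (fun i' _ => Finset.sum_nonneg fun m _ => abs_nonneg _) (Finset.mem_range.mpr hi)
  have h4 : |Bnat c k i| ≤ ∑ i' ∈ range d, |Bnat c k i'| :=
    Finset.single_le_sum (f := fun i' => |Bnat c k i'|) (fun i' _ => abs_nonneg _)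
      (Finset.mem_range.mpr hi)
  have hM1 := bigM_ge_one c k
  have hBnn : (0:ℝ) ≤ ∑ i' ∈ range d, |Bnat c k i'| :=
    Finset.sum_nonneg fun i' _ => abs_nonneg _
  have hAnn : (0:ℝ) ≤ ∑ m ∈ range d, |Anat c k i m| :=
    Finset.sum_nonneg fun m _ => abs_nonneg _
  have habs := abs_add_le (∑ m ∈ range d, Anat c k i m * Ynat c k x m) (Bnat c k i)
  show |(∑ m ∈ range d, Anat c k i m * Ynat c k x m) + Bnat c k i| ≤ (1 + NA c k) * bigM c k
  unfold NA
  nlinarith [le_trans h4 (by nlinarith : (∑ i' ∈ range d, |Bnat c k i'|)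
    ≤ (∑ i' ∈ range d, |Bnat c k i'|) * bigM c k)]

variable {x : Fin d → ℝ} (hx : ∀ i, x i ∈ Set.Icc c.a c.b)

include hx in
lemma Y_bound (k : ℕ) : ∀ {i : ℕ}, i < d → |Ynat c k x i| ≤ bigM c k := by
  induction k with
  | zero =>
    intro i hi
    obtain ⟨h1, h2⟩ := hx ⟨i, hi⟩
    unfold Ynat
    rw [dif_pos hi]
    show |annIter d c.A c.B 0 x ⟨i, hi⟩| ≤ _
    rw [show annIter d c.A c.B 0 x = x from rfl]
    show |x ⟨i, hi⟩| ≤ |c.a| + |c.b| + 1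
    rw [abs_le]
    constructor
    · have := neg_abs_le c.a; linarith [abs_nonneg c.b]
    · have := le_abs_self c.b; linarith [abs_nonneg c.a]
  | succ k ih =>
    intro i hi
    rw [Ynat_succ c k x hi]
    have hz := z_bound_aux c k x hi (fun m hm => ih hm)
    have habs : |max 0 (znat c k x i)| ≤ |znat c k x i| := by
      rcases le_or_gt (znat c k x i) 0 with h | h
      · rw [max_eq_left h]; simp [abs_nonneg]
      · rw [max_eq_right h.le]
    exact le_trans habs hz

include hx in
lemma z_bound (k : ℕ) {i : ℕ} (hi : i < d) : |znat c k x i| ≤ bigM c (k+1) :=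
  z_bound_aux c k x hi (fun m hm => Y_bound c hx k hm)

include hx in
lemma Y_bound_R (k : ℕ) (hk : k ≤ c.L) {i : ℕ} (hi : i < d) : |Ynat c k x i| ≤ Rr c :=
  le_trans (Y_bound c hx k hi) (bigM_mono c hk)

include hx in
lemma z_bound_R (k : ℕ) (hk : k + 1 ≤ c.L) {i : ℕ} (hi : i < d) : |znat c k x i| ≤ Rr c :=
  le_trans (z_bound c hx k hi) (bigM_mono c hk)

include hx in
lemma fnat_bound : |fnat c x| ≤ Pp c * (Rr c + 1) := by
  unfold fnat
  have h1 : |∑ m ∈ range d, ALnat c m * Ynat c (c.L - 1) x m|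
      ≤ (∑ m ∈ range d, |ALnat c m|) * Rr c := by
    rw [Finset.sum_mul]
    refine le_trans (Finset.abs_sum_le_sum_abs _ _) (Finset.sum_le_sum ?_)
    intro m hm
    rw [abs_mul]
    exact mul_le_mul_of_nonneg_left
      (Y_bound_R c hx (c.L - 1) (Nat.sub_le _ _) (Finset.mem_range.mp hm)) (abs_nonneg _)
  have h2 := ALsum_abs_le c
  have h3 := bL_abs_le c
  have hR := Rr_ge_one c
  have hP := Pp_ge_one c
  have habs := abs_add_le (∑ m ∈ range d, ALnat c m * Ynat c (c.L - 1) x m) c.bL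
  have hAnn : (0:ℝ) ≤ ∑ m ∈ range d, |ALnat c m| :=
    Finset.sum_nonneg fun m _ => abs_nonneg _
  nlinarith

end S17
end S17sec3
noncomputable section S17sec4
namespace S17
open Finset

variable {d : ℕ} (c : Ctx d)

lemma theta_pos (hL : 1 ≤ c.L) {l j : ℕ} (hl : l + 1 ≤ 3 * c.L - 2) (hj : j ≤ d) :
    0 < θnat c l j := by
  have hP := Pp_ge_one c
  have hR := Rr_ge_one c
  have hT := Tm_pos c
  have hC := Cc_nonneg c l
  have htan : |tan c l| ≤ Tm c := tan_abs_le c (by omega)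
  have htannn := neg_abs_le (tan c l)
  have htanub := le_abs_self (tan c l)
  have hQ2 := Qq_ge2 c
  unfold θnat
  by_cases hfin : l + 1 = 3 * c.L - 2
  · rw [if_pos hfin, ← hfin, Cc_succ_eq c (by omega)]
    have hSAL := SAL_abs_le c
    have hbL := bL_abs_le c
    have h1 : SAL c * Cc c l ≤ Pp c * Cc c l :=
      mul_le_mul_of_nonneg_right (le_trans (le_abs_self _) hSAL) hC
    have h2 : |(1 - SAL c) * tan c l| ≤ (1 + Pp c) * Tm c := by
      rw [abs_mul]
      refine mul_le_mul ?_ htan (abs_nonneg _) (by linarith)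
      calc |1 - SAL c| ≤ |(1:ℝ)| + |SAL c| := abs_sub _ _
        _ ≤ 1 + Pp c := by rw [abs_one]; linarith
    have h3 := le_abs_self ((1 - SAL c) * tan c l)
    have h4 := neg_abs_le c.bL
    have hQP : Pp c * Cc c l ≤ Qq c * Cc c l :=
      mul_le_mul_of_nonneg_right (by nlinarith) hC
    linarith
  · rw [if_neg hfin]
    by_cases hjd : j = d
    · rw [if_pos hjd]; norm_num
    · rw [if_neg hjd]
      have hjd' : j < d := by omega
      by_cases h1 : (l+1) % 3 = 1
      · rw [if_pos h1]
        have hkL : l / 3 < c.L := by omega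
        rw [Cc_succ_eq c (by omega)]
        have hSA := SA_abs_le c hkL hjd'
        have hB := B_abs_le c hkL hjd'
        have ha1 : SA c (l/3) j * Cc c l ≥ -(Pp c * Cc c l) := by
          nlinarith [neg_abs_le (SA c (l/3) j), mul_le_mul_of_nonneg_right
            (neg_le_of_abs_le hSA) hC]
        have h2 : |(1 + SA c (l/3) j) * tan c l| ≤ (1 + Pp c) * Tm c := by
          rw [abs_mul]
          refine mul_le_mul ?_ htan (abs_nonneg _) (by linarith)
          calc |1 + SA c (l/3) j| ≤ |(1:ℝ)| + |SA c (l/3) j| := abs_add_le _ _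
            _ ≤ 1 + Pp c := by rw [abs_one]; linarith
        have h3 := le_abs_self ((1 + SA c (l/3) j) * tan c l)
        have h4 := le_abs_self (Bnat c (l/3) j)
        have hQP : Pp c * Cc c l ≤ Qq c * Cc c l :=
          mul_le_mul_of_nonneg_right (by nlinarith) hC
        linarith
      · by_cases h2 : (l+1) % 3 = 2
        · rw [if_neg h1, if_pos h2]
          have := tan_le c (l := l) (by omega)
          linarith
        · rw [if_neg h1, if_neg h2]
          have := tan_le c (l := l) (by omega)
          have := Cc_nonneg c (l+1)
          linarith

end S17
end S17sec4
noncomputable section S17sec5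
namespace S17
open Finset

variable {d : ℕ} (c : Ctx d)

lemma wid_eq {l : ℕ} (hl : l < 3 * c.L - 2) : wid c l = d + 1 := by
  unfold wid; rw [if_neg (by omega)]

lemma Tt_fin (x : Fin d → ℝ) {l : ℕ} (hl : 3 * c.L - 2 ≤ l) :
    Tt c x l i = Cc c (3 * c.L - 2) + fnat c x := by
  unfold Tt; rw [if_pos hl]

lemma Tt_val0 (x : Fin d → ℝ) {l i : ℕ} (hl : l < 3 * c.L - 2) (hl3 : l % 3 = 0) (hi : i < d) :
    Tt c x l i = Cc c l + Ynat c (l/3) x i := by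
  unfold Tt; rw [if_neg (by omega), if_pos hi, if_pos hl3]

lemma Tt_val1 (x : Fin d → ℝ) {l i : ℕ} (hl : l < 3 * c.L - 2) (hl3 : l % 3 = 1) (hi : i < d) :
    Tt c x l i = Cc c l - znat c (l/3) x i := by
  unfold Tt; rw [if_neg (by omega), if_pos hi, if_neg (by omega), if_pos hl3]

lemma Tt_val2 (x : Fin d → ℝ) {l i : ℕ} (hl : l < 3 * c.L - 2) (hl3 : l % 3 = 2) (hi : i < d) :
    Tt c x l i = Cc c l - max 0 (znat c (l/3) x i) / 2 := by
  unfold Tt; rw [if_neg (by omega), if_pos hi, if_neg (by omega), if_neg (by omega)]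

lemma Tt_aux (x : Fin d → ℝ) {l i : ℕ} (hl : l < 3 * c.L - 2) (hi : ¬ i < d) :
    Tt c x l i = tan c l := by
  unfold Tt; rw [if_neg (by omega), if_neg hi]

end S17
end S17sec5
noncomputable section S17sec6
namespace S17
open Finset

variable {d : ℕ} (c : Ctx d) {x : Fin d → ℝ}

lemma fires_final (hd : 1 ≤ d) (hL : 1 ≤ c.L) (hx : ∀ i, x i ∈ Set.Icc c.a c.b)
    {l : ℕ} (hfin : l + 1 = 3 * c.L - 2) :
    FiresAt (fun i : Fin (wid c l) => wnat c l i.val 0) (fun _ => 0) (θnat c l 0)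
      (fun i => Tt c x l i.val) (Tt c x (l+1) 0) := by
  have hl : l < 3 * c.L - 2 := by omega
  have hwl := wid_eq c hl
  have hl3 : l % 3 = 0 := by omega
  have hk : l / 3 = c.L - 1 := by omega
  have hτe : Tt c x (l+1) 0 = Cc c (3 * c.L - 2) + fnat c x := Tt_fin c x (by omega)
  have hCW : Cc c (3 * c.L - 2) = Qq c * Cc c l + Qq c := by
    rw [← hfin]; exact Cc_succ_eq c (by omega)
  have hCge : Cc c l + Pp c * (Rr c + 1) + Rr c + 1 ≤ Cc c (3 * c.L - 2) := by
    rw [← hfin]; exact Cc_succ_ge c (by omega)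
  have hP := Pp_ge_one c
  have hR := Rr_ge_one c
  have hC := Cc_nonneg c l
  have hfb := fnat_bound c hx
  have hfb1 := neg_abs_le (fnat c x)
  have htl := tan_le c (l := l) (by omega)
  have hwv : ∀ m, m < d → wnat c l m 0 = ALnat c m := by
    intro m hm; unfold wnat; rw [if_pos hfin, if_pos hm]
  have hwa : wnat c l d 0 = 1 - SAL c := by
    unfold wnat; rw [if_pos hfin, if_neg (lt_irrefl d)]
  have htv : ∀ m, m < d → Tt c x l m = Cc c l + Ynat c (c.L - 1) x m := by
    intro m hm; rw [Tt_val0 c x hl hl3 hm, hk]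
  have hta : Tt c x l d = tan c l := Tt_aux c x hl (lt_irrefl d)
  refine firesAt_all (by omega) _ _ _ _ ?_ ?_ ?_
  · rw [Fin.sum_univ_eq_sum_range (fun m => wnat c l m 0) (wid c l), hwl,
      Finset.sum_range_succ, hwa, Finset.sum_congr rfl fun m hm => hwv m (Finset.mem_range.mp hm)]
    show SAL c + (1 - SAL c) = 1
    ring
  · intro i
    have hτge : Cc c (3 * c.L - 2) - Pp c * (Rr c + 1) ≤ Tt c x (l+1) 0 := by
      rw [hτe]; linarith
    rcases Nat.lt_or_ge i.val d with hi | hi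
    · rw [htv i.val hi]
      have hY := Y_bound_R c hx (c.L - 1) (Nat.sub_le _ _) hi
      have := le_abs_self (Ynat c (c.L - 1) x i.val)
      linarith
    · rw [Tt_aux c x hl (by omega)]
      linarith
  · rw [Fin.sum_univ_eq_sum_range (fun m => wnat c l m 0 * Tt c x l m) (wid c l), hwl,
      Finset.sum_range_succ, hwa, hta,
      Finset.sum_congr rfl fun m hm => by
        rw [hwv m (Finset.mem_range.mp hm), htv m (Finset.mem_range.mp hm)]]
    have hexp : ∑ m ∈ range d, ALnat c m * (Cc c l + Ynat c (c.L - 1) x m)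
        = SAL c * Cc c l + ∑ m ∈ range d, ALnat c m * Ynat c (c.L - 1) x m := by
      rw [Finset.sum_congr rfl (fun m _ => mul_add (ALnat c m) (Cc c l) (Ynat c (c.L-1) x m)),
        Finset.sum_add_distrib, ← Finset.sum_mul]
      rfl
    rw [hexp, hτe]
    have hθ : θnat c l 0 = Cc c (3 * c.L - 2) + c.bL - SAL c * Cc c l - (1 - SAL c) * tan c l := by
      unfold θnat; rw [if_pos hfin]
    rw [hθ]
    unfold fnat
    ring
  
end S17
end S17sec6
noncomputable section S17sec7
namespace S17
open Finset

variable {d : ℕ} (c : Ctx d) {x : Fin d → ℝ}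

lemma fires_aff (hd : 1 ≤ d) (hL : 1 ≤ c.L) (hx : ∀ i, x i ∈ Set.Icc c.a c.b)
    {l j : ℕ} (hnf : l + 1 < 3 * c.L - 2) (h1 : (l+1) % 3 = 1) (hj : j < d) :
    FiresAt (fun i : Fin (wid c l) => wnat c l i.val j) (fun _ => 0) (θnat c l j)
      (fun i => Tt c x l i.val) (Tt c x (l+1) j) := by
  have hl : l < 3 * c.L - 2 := by omega
  have hfin : l + 1 ≠ 3 * c.L - 2 := by omega
  have hjd : j ≠ d := by omega
  have hwl := wid_eq c hl
  have hl3 : l % 3 = 0 := by omega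
  set k := l / 3 with hkdef
  have hk1 : (l+1) / 3 = k := by omega
  have hkL : k ≤ c.L := by omega
  have hk1L : k + 1 ≤ c.L := by omega
  have hτe : Tt c x (l+1) j = Cc c (l+1) - znat c k x j := by
    rw [Tt_val1 c x hnf h1 hj, hk1]
  have hCge := Cc_succ_ge c (l := l) (by omega)
  have hP := Pp_ge_one c
  have hR := Rr_ge_one c
  have hC := Cc_nonneg c l
  have hz := z_bound_R c hx k hk1L hj
  have hPR : Rr c ≤ Pp c * (Rr c + 1) := by nlinarith
  have htl := tan_le c (l := l) (by omega)
  have hwv : ∀ m, m < d → wnat c l m j = -(Anat c k j m) := by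
    intro m hm; unfold wnat; rw [if_neg hfin, if_neg hjd, if_pos h1, if_pos hm]
  have hwa : wnat c l d j = 1 + SA c k j := by
    unfold wnat; rw [if_neg hfin, if_neg hjd, if_pos h1, if_neg (lt_irrefl d)]
  have htv : ∀ m, m < d → Tt c x l m = Cc c l + Ynat c k x m := by
    intro m hm; rw [Tt_val0 c x hl hl3 hm]
  have hta : Tt c x l d = tan c l := Tt_aux c x hl (lt_irrefl d)
  have hθ : θnat c l j
      = Cc c (l+1) - Bnat c k j + SA c k j * Cc c l - (1 + SA c k j) * tan c l := by
    unfold θnat; rw [if_neg hfin, if_neg hjd, if_pos h1]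
  refine firesAt_all (by omega) _ _ _ _ ?_ ?_ ?_
  · rw [Fin.sum_univ_eq_sum_range (fun m => wnat c l m j) (wid c l), hwl,
      Finset.sum_range_succ, hwa,
      Finset.sum_congr rfl fun m hm => hwv m (Finset.mem_range.mp hm)]
    rw [Finset.sum_neg_distrib]
    show -SA c k j + (1 + SA c k j) = 1
    ring
  · intro i
    have hτge : Cc c (l+1) - Rr c ≤ Tt c x (l+1) j := by
      rw [hτe]; have := le_abs_self (znat c k x j); linarith
    rcases Nat.lt_or_ge i.val d with hi | hi
    · rw [htv i.val hi]
      have hY := Y_bound_R c hx k hkL hi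
      have := le_abs_self (Ynat c k x i.val)
      linarith
    · rw [Tt_aux c x hl (by omega)]
      linarith
  · rw [Fin.sum_univ_eq_sum_range (fun m => wnat c l m j * Tt c x l m) (wid c l), hwl,
      Finset.sum_range_succ, hwa, hta,
      Finset.sum_congr rfl fun m hm => by
        rw [hwv m (Finset.mem_range.mp hm), htv m (Finset.mem_range.mp hm)]]
    have hexp : ∑ m ∈ range d, -(Anat c k j m) * (Cc c l + Ynat c k x m)
        = -(SA c k j * Cc c l) - ∑ m ∈ range d, Anat c k j m * Ynat c k x m := by
      rw [Finset.sum_congr rfl (fun m _ => by ring_nf :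
          ∀ m ∈ range d, -(Anat c k j m) * (Cc c l + Ynat c k x m)
            = -(Anat c k j m * Cc c l) + -(Anat c k j m * Ynat c k x m))]
      rw [Finset.sum_add_distrib, Finset.sum_neg_distrib, Finset.sum_neg_distrib,
        ← Finset.sum_mul]
      show -(SA c k j * Cc c l) + _ = _
      ring
    rw [hexp, hθ, hτe]
    unfold znat
    ring

lemma fires_resc (hd : 1 ≤ d) (hL : 1 ≤ c.L) (hx : ∀ i, x i ∈ Set.Icc c.a c.b)
    {l j : ℕ} (hnf : l + 1 < 3 * c.L - 2) (h0 : (l+1) % 3 = 0) (hj : j < d) :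
    FiresAt (fun i : Fin (wid c l) => wnat c l i.val j) (fun _ => 0) (θnat c l j)
      (fun i => Tt c x l i.val) (Tt c x (l+1) j) := by
  have hl : l < 3 * c.L - 2 := by omega
  have hfin : l + 1 ≠ 3 * c.L - 2 := by omega
  have hjd : j ≠ d := by omega
  have hwl := wid_eq c hl
  have hl3 : l % 3 = 2 := by omega
  set k := l / 3 with hkdef
  have hk1 : (l+1) / 3 = k + 1 := by omega
  have hk1L : k + 1 ≤ c.L := by omega
  have hτe : Tt c x (l+1) j = Cc c (l+1) + max 0 (znat c k x j) := by
    rw [Tt_val0 c x hnf h0 hj, hk1, Ynat_succ c k x hj]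
  have hCge := Cc_succ_ge c (l := l) (by omega)
  have hP := Pp_ge_one c
  have hR := Rr_ge_one c
  have hC := Cc_nonneg c l
  have hPR : Rr c ≤ Pp c * (Rr c + 1) := by nlinarith
  have hY1 : |max 0 (znat c k x j)| ≤ Rr c := by
    rw [← Ynat_succ c k x hj]; exact Y_bound_R c hx (k+1) hk1L hj
  have htl := tan_le c (l := l) (by omega)
  have hwv : ∀ m, m < d → wnat c l m j = (if m = j then (-2:ℝ) else 0) := by
    intro m hm
    unfold wnat; rw [if_neg hfin, if_neg hjd, if_neg (by omega), if_neg (by omega)]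
    by_cases hmj : m = j
    · rw [if_pos ⟨hmj, hm⟩, if_pos hmj]
    · rw [if_neg (by tauto), if_neg hmj, if_neg (by omega)]
  have hwa : wnat c l d j = 3 := by
    unfold wnat; rw [if_neg hfin, if_neg hjd, if_neg (by omega), if_neg (by omega),
      if_neg (by omega), if_pos rfl]
  have htv : ∀ m, m < d → Tt c x l m = Cc c l - max 0 (znat c k x m) / 2 := by
    intro m hm; rw [Tt_val2 c x hl hl3 hm]
  have hta : Tt c x l d = tan c l := Tt_aux c x hl (lt_irrefl d)
  have hθ : θnat c l j = Cc c (l+1) + 2 * Cc c l - 3 * tan c l := by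
    unfold θnat; rw [if_neg hfin, if_neg hjd, if_neg (by omega), if_neg (by omega)]
  refine firesAt_all (by omega) _ _ _ _ ?_ ?_ ?_
  · rw [Fin.sum_univ_eq_sum_range (fun m => wnat c l m j) (wid c l), hwl,
      Finset.sum_range_succ, hwa,
      Finset.sum_congr rfl fun m hm => hwv m (Finset.mem_range.mp hm),
      Finset.sum_ite_eq' (range d) j (fun _ => (-2:ℝ)), if_pos (Finset.mem_range.mpr hj)]
    ring
  · intro i
    have hτge : Cc c (l+1) - Rr c ≤ Tt c x (l+1) j := by
      rw [hτe]; have := neg_abs_le (max 0 (znat c k x j)); linarith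
    rcases Nat.lt_or_ge i.val d with hi | hi
    · rw [htv i.val hi]
      have hm0 : 0 ≤ max 0 (znat c k x i.val) := le_max_left _ _
      linarith
    · rw [Tt_aux c x hl (by omega)]
      linarith
  · rw [Fin.sum_univ_eq_sum_range (fun m => wnat c l m j * Tt c x l m) (wid c l), hwl,
      Finset.sum_range_succ, hwa, hta,
      Finset.sum_congr rfl fun m hm => by
        rw [hwv m (Finset.mem_range.mp hm), htv m (Finset.mem_range.mp hm), ite_mul, zero_mul],
      Finset.sum_ite_eq' (range d) j
        (fun m => (-2:ℝ) * (Cc c l - max 0 (znat c k x m) / 2)),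
      if_pos (Finset.mem_range.mpr hj), hθ, hτe]
    ring

lemma fires_aux (hd : 1 ≤ d) (hL : 1 ≤ c.L)
    {l : ℕ} (hnf : l + 1 < 3 * c.L - 2) (x : Fin d → ℝ) :
    FiresAt (fun i : Fin (wid c l) => wnat c l i.val d) (fun _ => 0) (θnat c l d)
      (fun i => Tt c x l i.val) (Tt c x (l+1) d) := by
  have hl : l < 3 * c.L - 2 := by omega
  have hfin : l + 1 ≠ 3 * c.L - 2 := by omega
  have hwl := wid_eq c hl
  have hτe : Tt c x (l+1) d = tan c (l+1) := Tt_aux c x hnf (lt_irrefl d)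
  have hIa : d < wid c l := by omega
  set Ia : Fin (wid c l) := ⟨d, hIa⟩ with hIadef
  have hw : (fun i : Fin (wid c l) => wnat c l i.val d)
      = (fun i => if i = Ia then (1:ℝ) else 0) := by
    funext i
    unfold wnat; rw [if_neg hfin, if_pos rfl]
    by_cases h : (i : ℕ) = d
    · rw [if_pos h, if_pos (Fin.ext h)]
    · rw [if_neg h, if_neg (fun hc => h (by rw [hc]))]
  have hθ : θnat c l d = 1 := by
    unfold θnat; rw [if_neg hfin, if_pos rfl]
  have htIa : Tt c x l Ia.val < Tt c x (l+1) d := by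
    rw [hτe, Tt_aux c x hl (lt_irrefl d)]
    unfold tan
    push_cast
    linarith
  rw [hw, hθ]
  have hmem : Ia ∈ Finset.univ.filter
      (fun k : Fin (wid c l) => Tt c x l k.val < Tt c x (l+1) d) :=
    Finset.mem_filter.mpr ⟨Finset.mem_univ _, htIa⟩
  refine firesAt_filt _ _ _ _ ⟨Ia, htIa⟩ ?_ ?_
  · beta_reduce
    rw [Finset.sum_ite_eq' _ Ia (fun _ => (1:ℝ)), if_pos hmem]
    norm_num
  · beta_reduce
    simp only [ite_mul, one_mul, zero_mul]
    rw [Finset.sum_ite_eq' _ Ia (fun k : Fin (wid c l) => Tt c x l k.val), if_pos hmem,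
      Finset.sum_ite_eq' _ Ia (fun _ => (1:ℝ)), if_pos hmem]
    rw [hτe, Tt_aux c x hl (lt_irrefl d)]
    unfold tan
    push_cast
    ring

end S17
end S17sec7
noncomputable section S17sec8
namespace S17
open Finset

variable {d : ℕ} (c : Ctx d) {x : Fin d → ℝ}

lemma fires_max (hd : 1 ≤ d) (hL : 1 ≤ c.L) (hx : ∀ i, x i ∈ Set.Icc c.a c.b)
    {l j : ℕ} (hnf : l + 1 < 3 * c.L - 2) (h2 : (l+1) % 3 = 2) (hj : j < d) :
    FiresAt (fun i : Fin (wid c l) => wnat c l i.val j) (fun _ => 0) (θnat c l j)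
      (fun i => Tt c x l i.val) (Tt c x (l+1) j) := by
  have hl : l < 3 * c.L - 2 := by omega
  have hfin : l + 1 ≠ 3 * c.L - 2 := by omega
  have hjd : j ≠ d := by omega
  have hwl := wid_eq c hl
  have hl3 : l % 3 = 1 := by omega
  set k := l / 3 with hkdef
  have hk1 : (l+1) / 3 = k := by omega
  have hk1L : k + 1 ≤ c.L := by omega
  set zj := znat c k x j with hzjdef
  have hτe : Tt c x (l+1) j = Cc c l - max 0 zj / 2 := by
    rw [Tt_val2 c x hnf (by omega) hj, hk1, Cc_max_eq c h2]
  have hR := Rr_ge_one c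
  have hC := Cc_nonneg c l
  have hz : |zj| ≤ Rr c := z_bound_R c hx k hk1L hj
  have htl := tan_le c (l := l) (by omega)
  have hI0' : j < wid c l := by omega
  have hIa' : d < wid c l := by omega
  set I0 : Fin (wid c l) := ⟨j, hI0'⟩ with hI0def
  set Ia : Fin (wid c l) := ⟨d, hIa'⟩ with hIadef
  have hne : I0 ≠ Ia := by
    intro h; exact hjd (congrArg Fin.val h)
  have hw : (fun i : Fin (wid c l) => wnat c l i.val j)
      = (fun i => if i = I0 then (1:ℝ) else if i = Ia then 1 else 0) := by
    funext i
    unfold wnat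
    rw [if_neg hfin, if_neg hjd, if_neg (by omega), if_pos h2]
    by_cases hij : (i : ℕ) = j
    · rw [if_pos (Or.inl hij), if_pos (Fin.ext hij)]
    · by_cases hid : (i : ℕ) = d
      · rw [if_pos (Or.inr hid), if_neg (fun hc => hij (congrArg Fin.val hc)),
          if_pos (Fin.ext hid)]
      · rw [if_neg (by tauto), if_neg (fun hc => hij (congrArg Fin.val hc)),
          if_neg (fun hc => hid (congrArg Fin.val hc))]
  have hθ : θnat c l j = Cc c l - tan c l := by
    unfold θnat; rw [if_neg hfin, if_neg hjd, if_neg (by omega), if_pos h2]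
  have htI0 : Tt c x l I0.val = Cc c l - zj := Tt_val1 c x hl hl3 hj
  have htIa : Tt c x l Ia.val = tan c l := Tt_aux c x hl (lt_irrefl d)
  have hmz : 0 ≤ max 0 zj := le_max_left _ _
  have hmzR : max 0 zj ≤ Rr c := max_le (by linarith) (by
    have := le_abs_self zj; linarith)
  have haIa : Tt c x l Ia.val < Tt c x (l+1) j := by
    rw [htIa, hτe]; linarith
  have hmemIa : Ia ∈ Finset.univ.filter
      (fun i : Fin (wid c l) => Tt c x l i.val < Tt c x (l+1) j) :=
    Finset.mem_filter.mpr ⟨Finset.mem_univ _, haIa⟩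
  rw [hw, hθ]
  refine firesAt_filt _ _ _ _ ⟨Ia, haIa⟩ ?_ ?_
  · beta_reduce
    rw [show (∑ i ∈ Finset.univ.filter
          (fun i : Fin (wid c l) => Tt c x l i.val < Tt c x (l+1) j),
          (if i = I0 then (1:ℝ) else if i = Ia then 1 else 0)) =
        (∑ i ∈ Finset.univ.filter
          (fun i : Fin (wid c l) => Tt c x l i.val < Tt c x (l+1) j),
          (if i = I0 then (1:ℝ) else if i = Ia then 1 else 0) * (fun _ => (1:ℝ)) i) from
      Finset.sum_congr rfl (fun i _ => by rw [mul_one])]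
    rw [sum_ind2 _ I0 Ia hne (fun _ => (1:ℝ))]
    rcases le_or_gt zj 0 with hzj | hzj
    · rw [if_neg, if_pos hmemIa]
      · norm_num
      · intro hmem
        have := (Finset.mem_filter.mp hmem).2
        rw [htI0, hτe, max_eq_left hzj] at this
        simp at this
        linarith
    · rw [if_pos, if_pos hmemIa]
      · norm_num
      · refine Finset.mem_filter.mpr ⟨Finset.mem_univ _, ?_⟩
        rw [htI0, hτe, max_eq_right hzj.le]
        linarith
  · beta_reduce
    rw [sum_ind2 _ I0 Ia hne (fun i => Tt c x l i.val)]
    rw [show (∑ i ∈ Finset.univ.filter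
          (fun i : Fin (wid c l) => Tt c x l i.val < Tt c x (l+1) j),
          (if i = I0 then (1:ℝ) else if i = Ia then 1 else 0)) =
        (∑ i ∈ Finset.univ.filter
          (fun i : Fin (wid c l) => Tt c x l i.val < Tt c x (l+1) j),
          (if i = I0 then (1:ℝ) else if i = Ia then 1 else 0) * (fun _ => (1:ℝ)) i) from
      Finset.sum_congr rfl (fun i _ => by rw [mul_one])]
    rw [sum_ind2 _ I0 Ia hne (fun _ => (1:ℝ))]
    rcases le_or_gt zj 0 with hzj | hzj
    · have hnotmem : I0 ∉ Finset.univ.filter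
          (fun i : Fin (wid c l) => Tt c x l i.val < Tt c x (l+1) j) := by
        intro hmem
        have := (Finset.mem_filter.mp hmem).2
        rw [htI0, hτe, max_eq_left hzj] at this
        simp at this
        linarith
      rw [if_neg hnotmem, if_neg hnotmem, if_pos hmemIa, if_pos hmemIa, htIa, hτe,
        max_eq_left hzj]
      ring
    · have hmem0 : I0 ∈ Finset.univ.filter
          (fun i : Fin (wid c l) => Tt c x l i.val < Tt c x (l+1) j) := by
        refine Finset.mem_filter.mpr ⟨Finset.mem_univ _, ?_⟩
        rw [htI0, hτe, max_eq_right hzj.le]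
        linarith
      rw [if_pos hmem0, if_pos hmem0, if_pos hmemIa, if_pos hmemIa, htI0, htIa, hτe,
        max_eq_right hzj.le]
      ring

end S17
end S17sec8
noncomputable section S17sec9
namespace S17
open Finset

variable {d : ℕ} (c : Ctx d)

lemma fnat_eq (x : Fin d → ℝ) : fnat c x = annReal d c.L c.A c.B c.AL c.bL x := by
  unfold fnat annReal
  congr 1
  refine sumconv (fun j => c.AL j * annIter d c.A c.B (c.L - 1) x j) _ ?_
  intro j
  unfold ALnat Ynat
  rw [dif_pos j.isLt, dif_pos j.isLt, Fin.eta]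

lemma width_sum (hd : 1 ≤ d) (hL : 1 ≤ c.L) :
    ∑ l ∈ range (3 * c.L - 2 + 1), wid c l
      = (d * c.L + 1) + c.L * (2 * d + 3) - (2 * d + 2) := by
  obtain ⟨m, hm⟩ : ∃ m, c.L = m + 1 := ⟨c.L - 1, by omega⟩
  rw [hm]
  have h32 : 3 * (m + 1) - 2 = 3 * m + 1 := by omega
  rw [h32, Finset.sum_range_succ]
  have h1 : wid c (3 * m + 1) = 1 := by
    unfold wid; rw [hm, h32, if_pos le_rfl]
  have h2 : ∀ l ∈ range (3 * m + 1), wid c l = d + 1 := by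
    intro l hl
    exact wid_eq c (by rw [hm, h32]; exact Finset.mem_range.mp hl)
  rw [h1, Finset.sum_congr rfl h2, Finset.sum_const, Finset.card_range, smul_eq_mul]
  rw [show (d * (m + 1) + 1) + (m + 1) * (2 * d + 3)
      = ((3 * m + 1) * (d + 1) + 1) + (2 * d + 2) from by ring, Nat.add_sub_cancel]

end S17
end S17sec9

open S17 in
theorem stmt17' (d L : ℕ) (hd : 1 ≤ d) (hL : 1 ≤ L) (a b : ℝ) (hab : a < b)
    (A : ℕ → Fin d → Fin d → ℝ) (B : ℕ → Fin d → ℝ) (AL : Fin d → ℝ) (bL : ℝ) :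
    ∃ (Φ : SNN) (taux : Fin (Φ.width 0) → ℝ) (Tin Tout : ℝ), Φ.Valid ∧
      Φ.Realizes d taux (annReal d L A B AL bL) a b Tin Tout ∧
      (∑ l ∈ Finset.range (Φ.L + 1), Φ.width l)
        = (d * L + 1) + L * (2 * d + 3) - (2 * d + 2) ∧
      Φ.L = 3 * L - 2 := by
  set c : Ctx d := ⟨L, A, B, AL, bL, a, b⟩ with hc
  have hcL : c.L = L := by rw [hc]
  have hL' : 1 ≤ c.L := by rw [hcL]; exact hL
  have hWfin : wid c (3 * c.L - 2) = 1 := by unfold wid; rw [if_pos le_rfl]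
  have hTout : 0 < Cc c (3 * c.L - 2) := by
    have h12 : 3 * c.L - 2 = (3 * c.L - 3) + 1 := by omega
    rw [h12, Cc_succ_eq c (by omega)]
    have := Qq_pos c
    have := Cc_nonneg c (3 * c.L - 3)
    nlinarith
  refine ⟨Phi c, fun _ => tan c 0, 0, Cc c (3 * c.L - 2), ⟨?_, ?_⟩, ⟨?_, ?_, ?_, ?_⟩, ?_, ?_⟩
  · -- thresholds positive
    intro l j
    show 0 < (if l + 1 ≤ 3 * c.L - 2 then θnat c l j.val else 1)
    split
    · next h =>
      refine theta_pos c hL' h ?_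
      have hjv : (j : ℕ) < wid c (l+1) := j.isLt
      have hw : wid c (l+1) ≤ d + 1 := by unfold wid; split <;> omega
      show j.val ≤ d
      omega
    · norm_num
  · intro l i j; exact le_refl 0
  · -- d ≤ width 0
    show d ≤ wid c 0
    rw [wid_eq c (by omega)]; omega
  · -- width L = 1
    exact hWfin
  · -- Tin < Tout
    exact hTout
  · -- main realization
    intro x hx'
    have hx : ∀ i, x i ∈ Set.Icc c.a c.b := hx'
    refine ⟨fun l i => Tt c x l i.val, ?_, ?_, ?_⟩
    · funext i
      show Tt c x 0 i.val = _
      by_cases hi : (i : ℕ) < d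
      · rw [dif_pos hi, Tt_val0 c x (by omega) rfl hi]
        show Cc c 0 + Ynat c 0 x i.val = 0 + x ⟨i.val, hi⟩
        have hC0 : Cc c 0 = 0 := rfl
        have hY0 : Ynat c 0 x i.val = x ⟨i.val, hi⟩ := by
          unfold Ynat; rw [dif_pos hi]; rfl
        rw [hC0, hY0]
      · rw [dif_neg hi, Tt_aux c x (by omega) hi]
    · funext i
      show Tt c x (3 * c.L - 2) i.val = Cc c (3 * c.L - 2) + annReal d L A B AL bL x
      rw [Tt_fin c x le_rfl]
      congr 1
      exact fnat_eq c x
    · intro l hl j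
      have hl' : l < 3 * c.L - 2 := hl
      have hjv : (j : ℕ) < wid c (l+1) := j.isLt
      have hθeq : (Phi c).Θ l j = θnat c l j.val := if_pos (by omega)
      show FiresAt (fun i : Fin (wid c l) => wnat c l i.val j.val) (fun _ => 0)
        ((Phi c).Θ l j) (fun i => Tt c x l i.val) (Tt c x (l+1) j.val)
      rw [hθeq]
      by_cases hfin : l + 1 = 3 * c.L - 2
      · have hj0 : j.val = 0 := by
          have hw1 : wid c (l + 1) = 1 := by unfold wid; rw [if_pos (by omega)]
          omega
        rw [hj0]
        exact fires_final c hd hL' hx hfin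
      · have hnf : l + 1 < 3 * c.L - 2 := by omega
        have hjlt : j.val < d + 1 := by
          have hw1 : wid c (l + 1) = d + 1 := wid_eq c hnf
          omega
        by_cases hjd : j.val = d
        · rw [hjd]
          exact fires_aux c hd hL' hnf x
        · have hj : j.val < d := by omega
          have h3 : (l+1) % 3 = 0 ∨ (l+1) % 3 = 1 ∨ (l+1) % 3 = 2 := by omega
          rcases h3 with h3 | h3 | h3
          · exact fires_resc c hd hL' hx hnf h3 hj
          · exact fires_aff c hd hL' hx hnf h3 hj
          · exact fires_max c hd hL' hx hnf h3 hj
  · -- width sum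
    have hPL : (Phi c).L = 3 * c.L - 2 := rfl
    have hPw : (Phi c).width = wid c := rfl
    rw [hPL, hPw, width_sum c hd hL', hcL]
  · -- depth
    show 3 * c.L - 2 = 3 * L - 2
    rw [hcL]

/-- for any ReLU ANN `Ψ` of depth `L`, constant width `d` and
one-dimensional output on `[a,b]^d`, there exists an SNN `Φ` with
`N(Φ) = N(Ψ) + L(2d+3) − (2d+2)` computational units (here `N(Ψ) = dL + 1`)
and `L(Φ) = 3L − 2` layers realizing `R_Ψ` on `[a,b]^d`. -/
theorem stmt17 (d L : ℕ) (hd : 1 ≤ d) (hL : 1 ≤ L) (a b : ℝ) (hab : a < b)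
    (A : ℕ → Fin d → Fin d → ℝ) (B : ℕ → Fin d → ℝ) (AL : Fin d → ℝ) (bL : ℝ) :
    ∃ (Φ : SNN) (taux : Fin (Φ.width 0) → ℝ) (Tin Tout : ℝ), Φ.Valid ∧
      Φ.Realizes d taux (annReal d L A B AL bL) a b Tin Tout ∧
      (∑ l ∈ Finset.range (Φ.L + 1), Φ.width l)
        = (d * L + 1) + L * (2 * d + 3) - (2 * d + 2) ∧
      Φ.L = 3 * L - 2 := by
  exact stmt17' d L hd hL a b hab A B AL bL
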